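/- Let n ≥ 1 and s ∈ ℝ. For every C¹ vector field Y on ℝⁿ with compact support contained in ℝⁿ ∖ {0}, one has ∫ r^{−2s−n+1} S(Y)(x̂, x̂) ⟨x̂, Y⟩ dx = s ∫ r^{−2s−n} ⟨x̂, Y⟩² dx, where r = ‖x‖ and x̂ = x/‖x‖. -/

import Mathlib

open MeasureTheory Real

/-- The `i`-th partial derivative of a function on `ℝⁿ`. -/
noncomputable def pd (n : ℕ) (f : EuclideanSpace ℝ (Fin n) → ℝ)
    (i : Fin n) (x : EuclideanSpace ℝ (Fin n)) : ℝ :=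
  fderiv ℝ f x (EuclideanSpace.single i 1)

/-- The squared Euclidean norm of the gradient, `|∇f|² = Σᵢ (∂ᵢf)²`. -/
noncomputable def gradSq (n : ℕ) (f : EuclideanSpace ℝ (Fin n) → ℝ)
    (x : EuclideanSpace ℝ (Fin n)) : ℝ :=
  ∑ i, (pd n f i x) ^ 2

/-- The Euclidean Laplacian, `Δf = Σᵢ ∂ᵢ²f`. -/
noncomputable def lap (n : ℕ) (f : EuclideanSpace ℝ (Fin n) → ℝ)
    (x : EuclideanSpace ℝ (Fin n)) : ℝ :=
  ∑ i, pd n (pd n f i) i x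

/-- The partial derivative `∂ᵢYⱼ` of a vector field `Y` on `ℝⁿ`. -/
noncomputable def vpd (n : ℕ)
    (Y : EuclideanSpace ℝ (Fin n) → EuclideanSpace ℝ (Fin n))
    (i j : Fin n) (x : EuclideanSpace ℝ (Fin n)) : ℝ :=
  fderiv ℝ (fun y => Y y j) x (EuclideanSpace.single i 1)

/-- The symmetrized gradient `S(Y)ᵢⱼ = (∂ᵢYⱼ + ∂ⱼYᵢ)/2` of a vector field. -/
noncomputable def symGrad (n : ℕ)
    (Y : EuclideanSpace ℝ (Fin n) → EuclideanSpace ℝ (Fin n))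
    (i j : Fin n) (x : EuclideanSpace ℝ (Fin n)) : ℝ :=
  (vpd n Y i j x + vpd n Y j i x) / 2

/-- The divergence `div Y = Σᵢ ∂ᵢYᵢ` of a vector field on `ℝⁿ`. -/
noncomputable def diverg (n : ℕ)
    (Y : EuclideanSpace ℝ (Fin n) → EuclideanSpace ℝ (Fin n))
    (x : EuclideanSpace ℝ (Fin n)) : ℝ :=
  ∑ i, vpd n Y i i x


/-!
Put `u = ⟪x, Y⟫`, `r = ‖x‖` and `a = -2s - n - 2`. Since `S(Y)(x, x) = Du(x) x - u`, the
left integrand is `r^a (u Du(x) x - u²)` and the right one is `r^a u²`. The Euler identity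
`∫ Dφ(x) x = -n ∫ φ` (integrate by parts against the coordinate functions) applied to
`φ = r^a u²`, whose radial derivative is `Dφ(x) x = a r^a u² + 2 r^a u Du(x) x`, gives
`∫ r^a u Du(x) x = -(a + n)/2 ∫ r^a u² = (s + 1) ∫ r^a u²`.
-/

theorem ContDiffOn.contDiff_mul_of_tsupport_subset {𝕜 E : Type*} [NontriviallyNormedField 𝕜]
    [NormedAddCommGroup E] [NormedSpace 𝕜 E] {k : WithTop ℕ∞} {U : Set E} {w g : E → 𝕜}
    (hw : ContDiffOn 𝕜 k w U) (hU : IsOpen U) (hg : ContDiff 𝕜 k g) (hgU : tsupport g ⊆ U) :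
    ContDiff 𝕜 k fun x => w x * g x := by
  refine contDiff_iff_contDiffAt.2 fun x => ?_
  by_cases hx : x ∈ U
  · exact (hw.contDiffAt (hU.mem_nhds hx)).mul hg.contDiffAt
  · have hwg : x ∉ tsupport fun x => w x * g x := fun h => hx (hgU (tsupport_mul_subset_right h))
    exact contDiffAt_const.congr_of_eventuallyEq (notMem_tsupport_iff_eventuallyEq.1 hwg)

theorem tsupport_fun_pow {X M₀ : Type*} [TopologicalSpace X] [MonoidWithZero M₀]
    [IsReduced M₀] (f : X → M₀) {k : ℕ} (hk : k ≠ 0) :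
    tsupport (fun x => f x ^ k) = tsupport f := by
  rw [tsupport, Function.support_pow f hk, tsupport]

theorem integral_fderiv_apply_self {E : Type*} [NormedAddCommGroup E] [NormedSpace ℝ E]
    [FiniteDimensional ℝ E] [MeasurableSpace E] [BorelSpace E] (μ : Measure E)
    [μ.IsAddHaarMeasure] {φ : E → ℝ} (hφ : ContDiff ℝ 1 φ) (hcs : HasCompactSupport φ) :
    ∫ x, fderiv ℝ φ x x ∂μ = -(Module.finrank ℝ E) * ∫ x, φ x ∂μ := by
  let b := Module.finBasis ℝ E
  let c : Fin (Module.finrank ℝ E) → E →L[ℝ] ℝ := fun i =>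
    LinearMap.toContinuousLinearMap (b.coord i)
  have hint : ∀ i, Integrable (fun x => c i x * fderiv ℝ φ x (b i)) μ := fun i =>
    ((c i).continuous.mul ((hφ.continuous_fderiv one_ne_zero).clm_apply continuous_const)
      ).integrable_of_hasCompactSupport
        ((hcs.fderiv ℝ).comp_left (g := fun L : E →L[ℝ] ℝ => L (b i)) rfl).mul_left
  have hcoord : ∀ i, ∫ x, c i x * fderiv ℝ φ x (b i) ∂μ = -∫ x, φ x ∂μ := by
    intro i
    have hci : ∀ x, fderiv ℝ (c i) x (b i) = 1 := fun x => by
      rw [(c i).fderiv]; simp [c]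
    have h := integral_mul_fderiv_eq_neg_fderiv_mul_of_integrable (μ := μ) (v := b i)
      (by simpa only [hci, one_mul] using hφ.continuous.integrable_of_hasCompactSupport hcs)
      (hint i) (((c i).continuous.mul hφ.continuous).integrable_of_hasCompactSupport hcs.mul_left)
      (fun x _ => (c i).differentiableAt) (fun x _ => hφ.differentiable one_ne_zero x)
    simpa only [hci, one_mul] using h
  have hsum : ∀ x, fderiv ℝ φ x x = ∑ i, c i x * fderiv ℝ φ x (b i) := by
    intro x
    calc fderiv ℝ φ x x = fderiv ℝ φ x (∑ i, b.repr x i • b i) := by rw [b.sum_repr]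
      _ = _ := by simp only [map_sum, map_smul, smul_eq_mul]; rfl
  rw [integral_congr_ae (.of_forall hsum), integral_finsetSum _ fun i _ => hint i]
  simp [hcoord]

section Radial

variable {E : Type*} [NormedAddCommGroup E] [InnerProductSpace ℝ E]

theorem contDiffOn_norm_rpow_compl_zero {k : WithTop ℕ∞} (a : ℝ) :
    ContDiffOn ℝ k (fun x : E => ‖x‖ ^ a) {0}ᶜ := fun _ hx =>
  ((contDiffAt_norm ℝ hx).rpow_const_of_ne (norm_ne_zero_iff.2 hx)).contDiffWithinAt

theorem fderiv_norm_rpow_apply_self {x : E} (hx : x ≠ 0) (a : ℝ) :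
    fderiv ℝ (fun y : E => ‖y‖ ^ a) x x = a * ‖x‖ ^ a := by
  have hr : ‖x‖ ≠ 0 := norm_ne_zero_iff.2 hx
  have hnorm : DifferentiableAt ℝ (‖·‖) x :=
    (contDiffAt_norm ℝ hx).differentiableAt one_ne_zero
  rw [(hnorm.hasFDerivAt.rpow_const (Or.inl hr)).fderiv]
  simp only [smul_apply, hnorm.fderiv_norm_self, smul_eq_mul, rpow_sub_one hr]
  field_simp

theorem integrable_norm_rpow_mul [MeasurableSpace E] [BorelSpace E] {μ : Measure E}
    [IsFiniteMeasureOnCompacts μ] {g : E → ℝ} (hg : Continuous g) (hcs : HasCompactSupport g)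
    (h0 : tsupport g ⊆ {0}ᶜ) (a : ℝ) : Integrable (fun x => ‖x‖ ^ a * g x) μ :=
  (contDiff_zero.1 ((contDiffOn_norm_rpow_compl_zero a).contDiff_mul_of_tsupport_subset
    isOpen_compl_singleton (contDiff_zero.2 hg) h0)).integrable_of_hasCompactSupport hcs.mul_left

theorem integrable_norm_rpow_mul_sq [MeasurableSpace E] [BorelSpace E] {μ : Measure E}
    [IsFiniteMeasureOnCompacts μ] {u : E → ℝ} (hu : Continuous u) (hcs : HasCompactSupport u)
    (h0 : tsupport u ⊆ {0}ᶜ) (a : ℝ) : Integrable (fun x => ‖x‖ ^ a * u x ^ 2) μ :=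
  integrable_norm_rpow_mul (hu.pow 2) (hcs.mono (Function.support_pow u two_ne_zero).le)
    (tsupport_fun_pow u two_ne_zero ▸ h0) a

theorem integrable_norm_rpow_mul_mul_fderiv_apply_self [MeasurableSpace E] [BorelSpace E]
    {μ : Measure E} [IsFiniteMeasureOnCompacts μ] {u : E → ℝ} (hu : ContDiff ℝ 1 u)
    (hcs : HasCompactSupport u) (h0 : tsupport u ⊆ {0}ᶜ) (a : ℝ) :
    Integrable (fun x => ‖x‖ ^ a * (u x * fderiv ℝ u x x)) μ :=
  integrable_norm_rpow_mul (hu.continuous.mul ((hu.continuous_fderiv one_ne_zero).clm_apply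
    continuous_id)) hcs.mul_right (tsupport_mul_subset_left.trans h0) a

theorem fderiv_norm_rpow_mul_sq_apply_self {u : E → ℝ} {x : E} (hx : x ≠ 0)
    (hu : DifferentiableAt ℝ u x) (a : ℝ) :
    fderiv ℝ (fun y => ‖y‖ ^ a * u y ^ 2) x x
      = a * (‖x‖ ^ a * u x ^ 2) + 2 * (‖x‖ ^ a * (u x * fderiv ℝ u x x)) := by
  have hr : DifferentiableAt ℝ (fun y : E => ‖y‖ ^ a) x :=
    ((contDiffOn_norm_rpow_compl_zero (k := 1) a).contDiffAt
      (isOpen_compl_singleton.mem_nhds hx)).differentiableAt one_ne_zero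
  have hu2 : DifferentiableAt ℝ (fun y => u y ^ 2) x := hu.pow 2
  rw [fderiv_fun_mul hr hu2, fderiv_fun_pow 2 hu]
  simp only [add_apply, smul_apply, smul_eq_mul, fderiv_norm_rpow_apply_self hx]
  ring

theorem integral_norm_rpow_mul_fderiv_apply_self [FiniteDimensional ℝ E] [MeasurableSpace E]
    [BorelSpace E] (μ : Measure E) [μ.IsAddHaarMeasure] {u : E → ℝ} (hu : ContDiff ℝ 1 u)
    (hcs : HasCompactSupport u) (h0 : tsupport u ⊆ {0}ᶜ) (a : ℝ) :
    ∫ x, ‖x‖ ^ a * (u x * fderiv ℝ u x x) ∂μ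
      = -((a + Module.finrank ℝ E) / 2) * ∫ x, ‖x‖ ^ a * u x ^ 2 ∂μ := by
  set φ : E → ℝ := fun x => ‖x‖ ^ a * u x ^ 2
  have hu2_supp := tsupport_fun_pow u two_ne_zero
  have hu2_cs : HasCompactSupport fun x => u x ^ 2 :=
    hcs.mono (Function.support_pow u two_ne_zero).le
  have hφ : ContDiff ℝ 1 φ :=
    (contDiffOn_norm_rpow_compl_zero a).contDiff_mul_of_tsupport_subset isOpen_compl_singleton
      (hu.pow 2) (hu2_supp ▸ h0)
  have hderiv : ∀ x, fderiv ℝ φ x x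
      = a * (‖x‖ ^ a * u x ^ 2) + 2 * (‖x‖ ^ a * (u x * fderiv ℝ u x x)) := by
    intro x
    rcases eq_or_ne x 0 with rfl | hx
    · have hu0 : 0 ∉ tsupport u := fun h => h0 h rfl
      have hφ0 : 0 ∉ tsupport φ := fun h => hu0 (hu2_supp ▸ tsupport_mul_subset_right h)
      simp [fderiv_of_notMem_tsupport ℝ hφ0, image_eq_zero_of_notMem_tsupport hu0]
    · exact fderiv_norm_rpow_mul_sq_apply_self hx (hu.differentiable one_ne_zero x) a
  have h := integral_fderiv_apply_self μ hφ hu2_cs.mul_left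
  rw [integral_congr_ae (.of_forall hderiv),
    integral_add ((integrable_norm_rpow_mul_sq hu.continuous hcs h0 a).const_mul a)
      ((integrable_norm_rpow_mul_mul_fderiv_apply_self hu hcs h0 a).const_mul 2),
    integral_const_mul, integral_const_mul] at h
  linear_combination h / 2

end Radial

section Euclidean

variable {n : ℕ}

theorem EuclideanSpace.clm_apply_eq_sum_mul_apply_single {ι : Type*} [Fintype ι] [DecidableEq ι]
    (L : EuclideanSpace ℝ ι →L[ℝ] ℝ) (x : EuclideanSpace ℝ ι) :
    L x = ∑ i, x i * L (EuclideanSpace.single i 1) := by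
  conv_lhs => rw [← (EuclideanSpace.basisFun ι ℝ).sum_repr x]
  simp

theorem EuclideanSpace.sum_div_norm_mul {ι : Type*} [Fintype ι] (x y : EuclideanSpace ℝ ι) :
    ∑ i, x i / ‖x‖ * y i = inner ℝ x y / ‖x‖ := by
  rw [PiLp.inner_apply, Finset.sum_div]
  exact Finset.sum_congr rfl fun i _ => by simp; ring

theorem sum_symGrad_mul_mul {Y : EuclideanSpace ℝ (Fin n) → EuclideanSpace ℝ (Fin n)}
    {x : EuclideanSpace ℝ (Fin n)} (hY : DifferentiableAt ℝ Y x) :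
    ∑ i, ∑ j, symGrad n Y i j x * x i * x j = inner ℝ x (fderiv ℝ Y x x) := by
  have hcoord : ∀ j, fderiv ℝ Y x x j = ∑ i, x i * vpd n Y i j x := fun j => by
    let pj : EuclideanSpace ℝ (Fin n) →L[ℝ] ℝ := EuclideanSpace.proj j
    have hj : HasFDerivAt (fun y => Y y j) (pj.comp (fderiv ℝ Y x)) x :=
      pj.hasFDerivAt.comp x hY.hasFDerivAt
    calc fderiv ℝ Y x x j = fderiv ℝ (fun y => Y y j) x x := by rw [hj.fderiv]; rfl
      _ = _ := EuclideanSpace.clm_apply_eq_sum_mul_apply_single _ x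
  have hswap :
      ∑ i, ∑ j, vpd n Y j i x * x i * x j = ∑ i, ∑ j, vpd n Y i j x * x i * x j := by
    rw [Finset.sum_comm]
    exact Finset.sum_congr rfl fun i _ => Finset.sum_congr rfl fun j _ => by ring
  calc ∑ i, ∑ j, symGrad n Y i j x * x i * x j
      = (∑ i, ∑ j, vpd n Y i j x * x i * x j
          + ∑ i, ∑ j, vpd n Y j i x * x i * x j) / 2 := by
        simp only [symGrad, ← Finset.sum_add_distrib, Finset.sum_div]
        exact Finset.sum_congr rfl fun i _ => Finset.sum_congr rfl fun j _ => by ring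
    _ = ∑ j, x j * ∑ i, x i * vpd n Y i j x := by
        rw [hswap, add_self_div_two, Finset.sum_comm]
        simp only [Finset.mul_sum]
        exact Finset.sum_congr rfl fun j _ => Finset.sum_congr rfl fun i _ => by ring
    _ = inner ℝ x (fderiv ℝ Y x x) := by simp [PiLp.inner_apply, hcoord, mul_comm]

theorem sum_symGrad_mul_div_norm_mul_div_norm
    {Y : EuclideanSpace ℝ (Fin n) → EuclideanSpace ℝ (Fin n)} {x : EuclideanSpace ℝ (Fin n)}
    (hY : DifferentiableAt ℝ Y x) :
    ∑ i, ∑ j, symGrad n Y i j x * (x i / ‖x‖) * (x j / ‖x‖)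
      = (fderiv ℝ (fun y => inner ℝ y (Y y)) x x - inner ℝ x (Y x)) / ‖x‖ ^ 2 := by
  rw [fderiv_inner_apply ℝ differentiableAt_fun_id hY, ← sum_symGrad_mul_mul hY]
  simp only [fderiv_fun_id, ContinuousLinearMap.id_apply, add_sub_cancel_right, Finset.sum_div]
  exact Finset.sum_congr rfl fun i _ => Finset.sum_congr rfl fun j _ => by ring

theorem EuclideanSpace.norm_rpow_mul_sum_div_norm_mul_sq {ι : Type*} [Fintype ι]
    (x y : EuclideanSpace ℝ ι) (a : ℝ) :
    ‖x‖ ^ (a + 2) * (∑ i, x i / ‖x‖ * y i) ^ 2 = ‖x‖ ^ a * inner ℝ x y ^ 2 := by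
  rcases eq_or_ne x 0 with rfl | hx
  · simp
  rw [EuclideanSpace.sum_div_norm_mul, show a + 2 = a + ((2 : ℕ) : ℝ) by norm_num,
    rpow_add_natCast (norm_ne_zero_iff.2 hx)]
  field_simp

theorem norm_rpow_mul_sum_symGrad_mul_sum_div_norm_mul
    {Y : EuclideanSpace ℝ (Fin n) → EuclideanSpace ℝ (Fin n)} {x : EuclideanSpace ℝ (Fin n)}
    (hY : DifferentiableAt ℝ Y x) (a : ℝ) :
    ‖x‖ ^ (a + 3) * (∑ i, ∑ j, symGrad n Y i j x * (x i / ‖x‖) * (x j / ‖x‖)) *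
        (∑ i, x i / ‖x‖ * Y x i)
      = ‖x‖ ^ a * (inner ℝ x (Y x) * fderiv ℝ (fun y => inner ℝ y (Y y)) x x)
        - ‖x‖ ^ a * inner ℝ x (Y x) ^ 2 := by
  rcases eq_or_ne x 0 with rfl | hx
  · simp
  rw [sum_symGrad_mul_div_norm_mul_div_norm hY, EuclideanSpace.sum_div_norm_mul,
    show a + 3 = a + ((3 : ℕ) : ℝ) by norm_num, rpow_add_natCast (norm_ne_zero_iff.2 hx)]
  field_simp

end Euclidean

theorem radial_symGrad_identity (n : ℕ) (s : ℝ)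
    (Y : EuclideanSpace ℝ (Fin n) → EuclideanSpace ℝ (Fin n))
    (hY : ContDiff ℝ 1 Y) (hsupp : HasCompactSupport Y)
    (h0 : tsupport Y ⊆ {x : EuclideanSpace ℝ (Fin n) | x ≠ 0}) :
    ∫ x : EuclideanSpace ℝ (Fin n),
        ‖x‖ ^ (-2 * s - (n : ℝ) + 1) *
          (∑ i, ∑ j, symGrad n Y i j x * (x i / ‖x‖) * (x j / ‖x‖)) *
          (∑ i, (x i / ‖x‖) * Y x i)
    = s * ∫ x : EuclideanSpace ℝ (Fin n),
        ‖x‖ ^ (-2 * s - (n : ℝ)) * (∑ i, (x i / ‖x‖) * Y x i) ^ 2 := by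
  set a : ℝ := -2 * s - n - 2
  set u : EuclideanSpace ℝ (Fin n) → ℝ := fun x => inner ℝ x (Y x)
  have hu : ContDiff ℝ 1 u := contDiff_id.inner ℝ hY
  have hu_supp : Function.support u ⊆ Function.support Y := fun x hx =>
    Function.mem_support.2 fun hYx => Function.mem_support.1 hx (by simp [u, hYx])
  have hu_cs : HasCompactSupport u := hsupp.mono hu_supp
  have hu0 : tsupport u ⊆ {0}ᶜ := (closure_mono hu_supp).trans h0
  have hL : ∀ x : EuclideanSpace ℝ (Fin n),
      ‖x‖ ^ (-2 * s - (n : ℝ) + 1) *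
          (∑ i, ∑ j, symGrad n Y i j x * (x i / ‖x‖) * (x j / ‖x‖)) *
          (∑ i, (x i / ‖x‖) * Y x i)
      = ‖x‖ ^ a * (u x * fderiv ℝ u x x) - ‖x‖ ^ a * u x ^ 2 := fun x => by
    rw [show -2 * s - (n : ℝ) + 1 = a + 3 by ring]
    exact norm_rpow_mul_sum_symGrad_mul_sum_div_norm_mul (hY.differentiable one_ne_zero x) a
  have hR : ∀ x : EuclideanSpace ℝ (Fin n),
      ‖x‖ ^ (-2 * s - (n : ℝ)) * (∑ i, (x i / ‖x‖) * Y x i) ^ 2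
        = ‖x‖ ^ a * u x ^ 2 := fun x => by
    rw [show -2 * s - (n : ℝ) = a + 2 by ring]
    exact EuclideanSpace.norm_rpow_mul_sum_div_norm_mul_sq x (Y x) a
  rw [integral_congr_ae (.of_forall hL), integral_congr_ae (.of_forall hR),
    integral_sub (integrable_norm_rpow_mul_mul_fderiv_apply_self hu hu_cs hu0 a)
      (integrable_norm_rpow_mul_sq hu.continuous hu_cs hu0 a),
    integral_norm_rpow_mul_fderiv_apply_self volume hu hu_cs hu0, finrank_euclideanSpace_fin]
  ring
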